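/- Let G be a graph whose cut monoid M_G is normal. Then the element (2, …, 2, 4) of ℤ^E × ℤ (all edge-coordinates equal to 2, last coordinate 4) lies in int(M_G); in particular m(G) ≤ 4. (This is the content of the lower bound reg K[G] ≥ |E| − 3 for normal cut algebras.) -/

import Mathlib

/-! Basic definitions for cut monoids of finite simple graphs. -/

open Classical in
/-- The cut vector of a vertex set `A`, as a function on `Sym2 V`:
value `1` on pairs with exactly one element in `A`, and `0` otherwise. -/
noncomputable def cutVec {V : Type} (A : Set V) : Sym2 V → ℤ :=
  Sym2.lift ⟨fun v w => if ((v ∈ A) ↔ (w ∈ A)) then 0 else 1,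
    fun v w => if_congr iff_comm rfl rfl⟩

variable {V : Type}

/-- The generators `(δ_A, 1)` of the cut monoid of `G`. -/
def cutGens (G : SimpleGraph V) : Set ((G.edgeSet → ℤ) × ℤ) :=
  {p | ∃ A : Set V, p = (fun e => cutVec A e.1, 1)}

/-- The cut monoid `M_G` of a graph `G`. -/
def cutMonoid (G : SimpleGraph V) : AddSubmonoid ((G.edgeSet → ℤ) × ℤ) :=
  AddSubmonoid.closure (cutGens G)

/-- The group `gp(M_G)` generated by the cut monoid. -/
def cutGroup (G : SimpleGraph V) : AddSubgroup ((G.edgeSet → ℤ) × ℤ) :=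
  AddSubgroup.closure (cutGens G)

/-- `M_G` is normal: every `x ∈ gp(M_G)` with `n • x ∈ M_G` for some `n ≥ 1` lies in `M_G`. -/
def CutNormal (G : SimpleGraph V) : Prop :=
  ∀ x ∈ cutGroup G, (∃ n : ℕ, 1 ≤ n ∧ n • x ∈ cutMonoid G) → x ∈ cutMonoid G

/-- `M_G` is seminormal: every `x ∈ gp(M_G)` with `2 • x ∈ M_G` and `3 • x ∈ M_G`
lies in `M_G`. -/
def CutSeminormal (G : SimpleGraph V) : Prop :=
  ∀ x ∈ cutGroup G, 2 • x ∈ cutMonoid G → 3 • x ∈ cutMonoid G → x ∈ cutMonoid G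

/-- Generators of the cone of `M_G`: nonnegative real multiples of the `(δ_A, 1)`. -/
noncomputable def cutConeGens (G : SimpleGraph V) : Set ((G.edgeSet → ℝ) × ℝ) :=
  {q | ∃ (c : ℝ) (A : Set V), 0 ≤ c ∧
    q = c • ((fun e => ((cutVec A e.1 : ℤ) : ℝ), (1 : ℝ)))}

/-- The cone `cone(M_G)`: all finite nonnegative real combinations of the `(δ_A, 1)`. -/
noncomputable def cutCone (G : SimpleGraph V) : Set ((G.edgeSet → ℝ) × ℝ) :=
  (AddSubmonoid.closure (cutConeGens G) : Set ((G.edgeSet → ℝ) × ℝ))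

/-- The canonical map from `ℤ^E × ℤ` to `ℝ^E × ℝ`. -/
noncomputable def toRealCut (G : SimpleGraph V) (p : (G.edgeSet → ℤ) × ℤ) :
    (G.edgeSet → ℝ) × ℝ :=
  (fun e => ((p.1 e : ℤ) : ℝ), ((p.2 : ℤ) : ℝ))

/-- `int(M_G)`: elements of `M_G` mapping into the topological interior of `cone(M_G)`. -/
noncomputable def cutInterior (G : SimpleGraph V) : Set ((G.edgeSet → ℤ) × ℤ) :=
  {p | p ∈ cutMonoid G ∧ toRealCut G p ∈ interior (cutCone G)}

/-- The set of last coordinates `α ∈ ℕ` realized by elements of `int(M_G)`;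
its least element is `m(G)`. -/
noncomputable def cutDegrees (G : SimpleGraph V) : Set ℕ :=
  {α | ∃ x : G.edgeSet → ℤ, ((x, (α : ℤ)) : (G.edgeSet → ℤ) × ℤ) ∈ cutInterior G}

/-- `H` is a minor of `G`: branch sets `B u` are nonempty, pairwise disjoint,
induce connected subgraphs, and edges of `H` are witnessed by edges of `G`. -/
def GraphMinor {W V : Type} (H : SimpleGraph W) (G : SimpleGraph V) : Prop :=
  ∃ B : W → Set V,
    (∀ u, (B u).Nonempty) ∧
    (∀ u v, u ≠ v → Disjoint (B u) (B v)) ∧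
    (∀ u, (G.induce (B u)).Connected) ∧
    (∀ u v, H.Adj u v → ∃ a ∈ B u, ∃ b ∈ B v, G.Adj a b)

/-- `G` is `K₅`-minor-free. -/
def K5Free (G : SimpleGraph V) : Prop :=
  ¬ GraphMinor (⊤ : SimpleGraph (Fin 5)) G

/-- `G` is bipartite: vertices split into two parts so every edge joins the parts. -/
def BipartiteG (G : SimpleGraph V) : Prop :=
  ∃ s : Set V, ∀ ⦃v w⦄, G.Adj v w → ((v ∈ s ∧ w ∉ s) ∨ (w ∈ s ∧ v ∉ s))

/-- `G` has an induced cycle of length `n` (n ≥ 3): an induced-subgraph copy of the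
cycle graph of length `n`. -/
def HasInducedCycleLen (G : SimpleGraph V) (n : ℕ) : Prop :=
  3 ≤ n ∧ Nonempty (SimpleGraph.cycleGraph n ↪g G)

/-- `G` contains a triangle. -/
def HasTriangle (G : SimpleGraph V) : Prop :=
  ∃ a b c, G.Adj a b ∧ G.Adj b c ∧ G.Adj a c

/-- `G` is chordal: every induced cycle is a triangle. -/
def ChordalG (G : SimpleGraph V) : Prop :=
  ∀ n, HasInducedCycleLen G n → n = 3

/-- `G` is bridgeless: every edge lies on some cycle. -/
def BridgelessG (G : SimpleGraph V) : Prop :=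
  ∀ e ∈ G.edgeSet, ∃ (v : V) (c : G.Walk v v), c.IsCycle ∧ e ∈ c.edges

/-- `G` is (isomorphic to) a cycle of length `n`. -/
def IsCycleOfLen (G : SimpleGraph V) (n : ℕ) : Prop :=
  3 ≤ n ∧ Nonempty (G ≃g SimpleGraph.cycleGraph n)

/-- `G` is a cycle. -/
def IsCycleGraph (G : SimpleGraph V) : Prop :=
  ∃ n, IsCycleOfLen G n

/-- `G` is a `0`-sum of `G1` and `G2`: copies of `G1`, `G2` cover `G`,
overlap in exactly one vertex, and every edge comes from `G1` or `G2`. -/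
def IsZeroSumDecomp {V1 V2 : Type} (G : SimpleGraph V) (G1 : SimpleGraph V1)
    (G2 : SimpleGraph V2) : Prop :=
  ∃ (f1 : V1 ↪ V) (f2 : V2 ↪ V),
    Set.range f1 ∪ Set.range f2 = Set.univ ∧
    (∃ v, Set.range f1 ∩ Set.range f2 = {v}) ∧
    (∀ a b, G.Adj a b ↔
      ((∃ x y, f1 x = a ∧ f1 y = b ∧ G1.Adj x y) ∨
       (∃ x y, f2 x = a ∧ f2 y = b ∧ G2.Adj x y)))

/-- `G` is a `1`-sum of `G1` and `G2` along a common edge. -/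
def IsOneSumDecomp {V1 V2 : Type} (G : SimpleGraph V) (G1 : SimpleGraph V1)
    (G2 : SimpleGraph V2) : Prop :=
  ∃ (f1 : V1 ↪ V) (f2 : V2 ↪ V) (v w : V),
    v ≠ w ∧
    Set.range f1 ∪ Set.range f2 = Set.univ ∧
    Set.range f1 ∩ Set.range f2 = {v, w} ∧
    (∃ x y, f1 x = v ∧ f1 y = w ∧ G1.Adj x y) ∧
    (∃ x y, f2 x = v ∧ f2 y = w ∧ G2.Adj x y) ∧
    (∀ a b, G.Adj a b ↔
      ((∃ x y, f1 x = a ∧ f1 y = b ∧ G1.Adj x y) ∨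
       (∃ x y, f2 x = a ∧ f2 y = b ∧ G2.Adj x y)))

/-- Ring graphs: obtained, up to adding isolated vertices, from finitely many
(finite) trees and cycles by iterated `0`-sums and `1`-sums. -/
inductive IsRingGraph : {V : Type} → SimpleGraph V → Prop
  | tree {V : Type} (G : SimpleGraph V) :
      Finite V → G.Connected → G.IsAcyclic → IsRingGraph G
  | cycle {V : Type} (G : SimpleGraph V) : IsCycleGraph G → IsRingGraph G
  | zeroSum {V1 V2 V : Type} {G1 : SimpleGraph V1} {G2 : SimpleGraph V2}
      {G : SimpleGraph V} :
      IsRingGraph G1 → IsRingGraph G2 → IsZeroSumDecomp G G1 G2 → IsRingGraph G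
  | oneSum {V1 V2 V : Type} {G1 : SimpleGraph V1} {G2 : SimpleGraph V2}
      {G : SimpleGraph V} :
      IsRingGraph G1 → IsRingGraph G2 → IsOneSumDecomp G G1 G2 → IsRingGraph G
  | addIsolated {V W : Type} {G : SimpleGraph V} {H : SimpleGraph W} (f : V ↪ W) :
      IsRingGraph G → (∀ a b, H.Adj a b ↔ ∃ x y, f x = a ∧ f y = b ∧ G.Adj x y) →
      IsRingGraph H

/-- An edge of an induced subgraph is an edge of the ambient graph. -/
lemma induce_edge_mem (G : SimpleGraph V) (s : Set V) (e : Sym2 s)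
    (he : e ∈ (G.induce s).edgeSet) : e.map Subtype.val ∈ G.edgeSet := by
  induction e using Sym2.ind with
  | _ a b =>
    rw [Sym2.map_pair_eq, SimpleGraph.mem_edgeSet]
    exact he

/-- Restriction of a vector indexed by the edges of `G` to the edges of the
subgraph of `G` induced on `s`. -/
noncomputable def restrictCut (G : SimpleGraph V) (s : Set V) (p : G.edgeSet → ℤ) :
    (G.induce s).edgeSet → ℤ :=
  fun e => p ⟨e.1.map Subtype.val, induce_edge_mem G s e.1 e.2⟩

/-! `(2, …, 2, 4)` lies in `gp(M_G)`, because `δ_{u} + δ_{v} - δ_{u,v} - δ_∅` is twice the unit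
vector of the edge `uv` and `(δ_∅, 1) = (0, 1)`. Every edge is cut by exactly half of the `2^n`
vertex subsets, so `2^n • (2, …, 2, 4) = 4 • ∑_A (δ_A, 1) ∈ M_G`, and normality gives
`(2, …, 2, 4) ∈ M_G`. Over `ℝ` the same identity writes `(2, …, 2, 4)` as a combination of all
`(δ_A, 1)` with coefficients `4 / 2^n > 0`; since these vectors span `ℝ^E × ℝ`, such a point is
interior to the cone. -/

theorem sum_smul_mem_interior_of_span_eq_top {ι E : Type*} [Fintype ι] [AddCommGroup E]
    [Module ℝ E] [TopologicalSpace E] [IsTopologicalAddGroup E] [ContinuousSMul ℝ E] [T2Space E]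
    [FiniteDimensional ℝ E] {v : ι → E} (hv : Submodule.span ℝ (Set.range v) = ⊤) {S : Set E}
    (hS : ∀ c : ι → ℝ, (∀ i, 0 ≤ c i) → ∑ i, c i • v i ∈ S)
    {c : ι → ℝ} (hc : ∀ i, 0 < c i) : ∑ i, c i • v i ∈ interior S := by
  set T := Fintype.linearCombination ℝ v
  have hT : IsOpenMap T := LinearMap.isOpenMap_of_finiteDimensional T
    ((span_range_eq_top_iff_surjective_fintypeLinearCombination ℝ v).mp hv)
  have hpos : IsOpen (Set.univ.pi fun _ : ι => Set.Ioi (0 : ℝ)) :=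
    isOpen_set_pi Set.finite_univ fun _ _ => isOpen_Ioi
  refine interior_maximal ?_ (hT _ hpos) ⟨c, fun i _ => hc i, rfl⟩
  rintro _ ⟨d, hd, rfl⟩
  exact hS d fun i => (hd i (Set.mem_univ i)).le

open Classical in
lemma cutVec_mk (A : Set V) (x y : V) :
    cutVec A s(x, y) = if (x ∈ A ↔ y ∈ A) then 0 else 1 := by
  simp [cutVec]

/-- `s ↦ s ∆ {x}` exchanges the vertex subsets cutting `s(x, y)` with those that do not. -/
lemma two_mul_sum_cutVec [Fintype V] {z : Sym2 V} (hz : ¬ z.IsDiag) :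
    2 * ∑ s : Finset V, cutVec (s : Set V) z = 2 ^ Fintype.card V := by
  classical
  induction z using Sym2.ind with | _ x y => ?_
  have hxy : x ≠ y := hz
  have hflip : Function.Involutive (fun s : Finset V => symmDiff s {x}) :=
    fun s => symmDiff_symmDiff_cancel_right _ _
  have hpair (s : Finset V) :
      cutVec (s : Set V) s(x, y) + cutVec (↑(symmDiff s {x}) : Set V) s(x, y) = 1 := by
    by_cases hx : x ∈ s <;> by_cases hy : y ∈ s <;>
      simp [cutVec_mk, Set.mem_symmDiff, hx, hy, hxy.symm]
  have hreindex : ∑ s : Finset V, cutVec (↑(symmDiff s {x}) : Set V) s(x, y)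
      = ∑ s : Finset V, cutVec (s : Set V) s(x, y) :=
    Fintype.sum_bijective _ hflip.bijective _ _ fun _ => rfl
  calc 2 * ∑ s : Finset V, cutVec (s : Set V) s(x, y)
      = ∑ s : Finset V, (cutVec (s : Set V) s(x, y)
          + cutVec (↑(symmDiff s {x}) : Set V) s(x, y)) := by
        rw [Finset.sum_add_distrib, hreindex, two_mul]
    _ = 2 ^ Fintype.card V := by
        rw [Finset.sum_congr rfl fun s _ => hpair s]
        simp [Fintype.card_finset]

open Classical in
lemma cutVec_singleton_add_singleton_sub_pair {u v : V} {z : Sym2 V} (huv : u ≠ v)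
    (hz : ¬ z.IsDiag) :
    cutVec {u} z + cutVec {v} z - cutVec {u, v} z = if z = s(u, v) then 2 else 0 := by
  induction z using Sym2.ind with | _ x y => ?_
  have hxy : x ≠ y := hz
  simp only [cutVec_mk, Set.mem_singleton_iff, Set.mem_insert_iff, Sym2.eq_iff]
  by_cases h1 : x = u <;> by_cases h2 : x = v <;> by_cases h3 : y = u <;> by_cases h4 : y = v <;>
    simp_all

lemma cutVec_empty (z : Sym2 V) : cutVec ∅ z = 0 := by
  induction z using Sym2.ind with | _ x y => simp [cutVec_mk]

section CutPoint

variable (R : Type*) [CommRing R] (G : SimpleGraph V)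

noncomputable def cutPoint (A : Set V) : (G.edgeSet → R) × R :=
  (fun e => (cutVec A e.1 : R), 1)

lemma cutGens_eq_range_cutPoint : cutGens G = Set.range (cutPoint ℤ G) := by
  ext p
  simp [cutGens, cutPoint, eq_comm]

lemma cutPoint_empty : cutPoint R G ∅ = (0, 1) := by
  ext e <;> simp [cutPoint, cutVec_empty]

open Classical in
lemma cutPoint_combination_eq_single (e : G.edgeSet) {u v : V} (he : e.1 = s(u, v)) :
    cutPoint R G {u} + cutPoint R G {v} - cutPoint R G {u, v} - cutPoint R G ∅
      = (Pi.single e 2, 0) := by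
  have huv : u ≠ v := G.ne_of_adj (G.mem_edgeSet.mp (he ▸ e.2))
  refine Prod.ext (funext fun f => ?_) (by simp [cutPoint])
  have key := cutVec_singleton_add_singleton_sub_pair huv (G.not_isDiag_of_mem_edgeSet f.2)
  have hfe : f = e ↔ f.1 = s(u, v) := he ▸ Subtype.ext_iff
  simp only [cutPoint, Prod.fst_add, Prod.fst_sub, Pi.add_apply, Pi.sub_apply, cutVec_empty,
    Int.cast_zero, sub_zero, Pi.single_apply, hfe]
  rw [← Int.cast_add, ← Int.cast_sub, key]
  split_ifs <;> simp

lemma two_smul_mem_span_cutPoint [Fintype V] (x : G.edgeSet → R) (a : R) :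
    ((2 : R) • x, a) ∈ Submodule.span R (Set.range fun s : Finset V => cutPoint R G s) := by
  classical
  have hgen (s : Finset V) :
      cutPoint R G s ∈ Submodule.span R (Set.range fun s : Finset V => cutPoint R G s) :=
    Submodule.subset_span ⟨s, rfl⟩
  have hedge (e : G.edgeSet) : (Pi.single e (2 : R), (0 : R))
      ∈ Submodule.span R (Set.range fun s : Finset V => cutPoint R G s) := by
    obtain ⟨⟨u, v⟩, huv⟩ := Sym2.mk_surjective e.1
    rw [← cutPoint_combination_eq_single R G e huv.symm]
    refine sub_mem (sub_mem (add_mem ?_ ?_) ?_) ?_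
    · simpa using hgen {u}
    · simpa using hgen {v}
    · simpa using hgen {u, v}
    · simpa using hgen ∅
  have hdecomp : ((2 : R) • x, a) = ∑ e, x e • (Pi.single e (2 : R), (0 : R))
      + a • cutPoint R G ∅ := by
    rw [cutPoint_empty]
    ext f <;> simp [Prod.fst_sum, Prod.snd_sum, Finset.sum_apply, Pi.single_apply, mul_comm]
  rw [hdecomp]
  exact add_mem (Submodule.sum_mem _ fun e _ => Submodule.smul_mem _ _ (hedge e))
    (Submodule.smul_mem _ _ (by simpa using hgen ∅))

lemma two_nsmul_sum_cutPoint [Fintype V] :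
    2 • ∑ s : Finset V, cutPoint R G s
      = 2 ^ Fintype.card V • ((1, 2) : (G.edgeSet → R) × R) := by
  refine Prod.ext (funext fun e => ?_) ?_
  · simp only [cutPoint, Prod.smul_fst, Prod.fst_sum, Pi.smul_apply, Finset.sum_apply,
      Pi.one_apply]
    have h := congrArg (Int.cast : ℤ → R) (two_mul_sum_cutVec (G.not_isDiag_of_mem_edgeSet e.2))
    push_cast at h
    simpa [nsmul_eq_mul] using h
  · simp [cutPoint, Prod.snd_sum, Fintype.card_finset, mul_comm]

end CutPoint

section FiniteGraph

variable [Fintype V] (G : SimpleGraph V)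

lemma twoFour_mem_cutGroup : ((fun _ => 2, 4) : (G.edgeSet → ℤ) × ℤ) ∈ cutGroup G := by
  have hspan : Submodule.span ℤ (Set.range fun s : Finset V => cutPoint ℤ G s)
      ≤ Submodule.span ℤ (cutGens G) := by
    rw [cutGens_eq_range_cutPoint]
    refine Submodule.span_mono ?_
    rintro _ ⟨s, rfl⟩
    exact ⟨s, rfl⟩
  rw [cutGroup, ← Submodule.span_int_eq_addSubgroupClosure]
  have htwo : ((fun _ => 2, 4) : (G.edgeSet → ℤ) × ℤ) = ((2 : ℤ) • 1, 4) := by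
    ext <;> simp
  rw [htwo]
  exact hspan (two_smul_mem_span_cutPoint ℤ G 1 4)

lemma pow_nsmul_twoFour_mem_cutMonoid :
    2 ^ Fintype.card V • ((fun _ => 2, 4) : (G.edgeSet → ℤ) × ℤ) ∈ cutMonoid G := by
  have hsum : 2 ^ Fintype.card V • ((fun _ => 2, 4) : (G.edgeSet → ℤ) × ℤ)
      = 4 • ∑ s : Finset V, cutPoint ℤ G s := by
    have htwo :
        ((fun _ => 2, 4) : (G.edgeSet → ℤ) × ℤ) = 2 • ((1, 2) : (G.edgeSet → ℤ) × ℤ) := by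
      ext <;> simp
    rw [htwo, smul_comm, ← two_nsmul_sum_cutPoint, ← mul_nsmul']
  have hgen (s : Finset V) : cutPoint ℤ G s ∈ cutMonoid G :=
    AddSubmonoid.subset_closure ⟨s, rfl⟩
  rw [hsum]
  exact AddSubmonoid.nsmul_mem _ (AddSubmonoid.sum_mem _ fun s _ => hgen s) 4

lemma span_cutPoint_eq_top :
    Submodule.span ℝ (Set.range fun s : Finset V => cutPoint ℝ G s) = ⊤ := by
  refine eq_top_iff.2 fun p _ => ?_
  simpa [smul_smul] using two_smul_mem_span_cutPoint ℝ G ((2⁻¹ : ℝ) • p.1) p.2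

lemma sum_smul_cutPoint_mem_cutCone (c : Finset V → ℝ) (hc : ∀ s, 0 ≤ c s) :
    ∑ s, c s • cutPoint ℝ G s ∈ cutCone G := by
  refine AddSubmonoid.sum_mem _ fun s _ => AddSubmonoid.subset_closure ?_
  exact ⟨c s, s, hc s, rfl⟩

lemma toRealCut_twoFour_eq_sum_smul_cutPoint :
    toRealCut G ((fun _ => 2, 4) : (G.edgeSet → ℤ) × ℤ)
      = ∑ s : Finset V, (4 / 2 ^ Fintype.card V : ℝ) • cutPoint ℝ G s := by
  have hpow : (2 ^ Fintype.card V : ℝ) ≠ 0 := by positivity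
  calc toRealCut G ((fun _ => 2, 4) : (G.edgeSet → ℤ) × ℤ)
      = (2 / 2 ^ Fintype.card V : ℝ) • 2 ^ Fintype.card V
          • ((1, 2) : (G.edgeSet → ℝ) × ℝ) := by
        ext
        · simp [toRealCut, hpow]
        · simp [toRealCut]
          field_simp
          norm_num
    _ = ∑ s : Finset V, (4 / 2 ^ Fintype.card V : ℝ) • cutPoint ℝ G s := by
        rw [← two_nsmul_sum_cutPoint, ← Finset.smul_sum, two_nsmul, smul_add, ← add_smul]
        ring_nf

lemma toRealCut_twoFour_mem_interior_cutCone :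
    toRealCut G ((fun _ => 2, 4) : (G.edgeSet → ℤ) × ℤ) ∈ interior (cutCone G) := by
  rw [toRealCut_twoFour_eq_sum_smul_cutPoint]
  exact sum_smul_mem_interior_of_span_eq_top (span_cutPoint_eq_top G)
    (sum_smul_cutPoint_mem_cutCone G) fun _ => by positivity

end FiniteGraph

/-- If the cut monoid of `G` is normal, then `(2,…,2,4)` lies in
`int(M_G)`; in particular `m(G) ≤ 4`. -/
theorem normal_lower_bound {V : Type} [Fintype V] (G : SimpleGraph V)
    (hnorm : CutNormal G) :
    (((fun _ => 2, 4) : (G.edgeSet → ℤ) × ℤ) ∈ cutInterior G) ∧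
    sInf (cutDegrees G) ≤ 4 := by
  have hmem : ((fun _ => 2, 4) : (G.edgeSet → ℤ) × ℤ) ∈ cutInterior G :=
    ⟨hnorm _ (twoFour_mem_cutGroup G)
      ⟨2 ^ Fintype.card V, Nat.one_le_two_pow, pow_nsmul_twoFour_mem_cutMonoid G⟩,
      toRealCut_twoFour_mem_interior_cutCone G⟩
  exact ⟨hmem, Nat.sInf_le ⟨fun _ => 2, hmem⟩⟩
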